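/- If Q is a countable thin quasi-order, then [Q]^{<ω}, the set of finite subsets of Q ordered by: a ≤ b iff there is an injective map h : a → b with x ≤_Q h(x) for all x ∈ a, is thin. -/

import Mathlib

/-- The shift map on sequences. -/
def seqShift {Q : Type*} (X : ℕ → Q) : ℕ → Q := fun k => X (k + 1)

/-- The set `Q⃗` of sequences `X` with `¬ r (X k) (X (k+1))` for all `k`. -/
def vecSet {Q : Type*} (r : Q → Q → Prop) : Set (ℕ → Q) :=
  {X | ∀ k, ¬ r (X k) (X (k + 1))}

/-- The shift graph on a subset `A` of `Qᴺ` (with `Q` discrete, `Qᴺ` carrying the product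
Borel structure) admits a Borel proper 3-colouring. -/
def Colour3 {Q : Type*} (A : Set (ℕ → Q)) : Prop :=
  letI : MeasurableSpace Q := ⊤
  ∃ c : A → Fin 3, Measurable c ∧
    ∀ (X : ℕ → Q) (hX : X ∈ A) (hX' : seqShift X ∈ A),
      c ⟨X, hX⟩ ≠ c ⟨seqShift X, hX'⟩

/-- A relation `r` on `Q` is *thin* if the shift graph on `Q⃗ = vecSet r`
is Borel 3-colourable; otherwise it is *thick*. -/
def IsThin {Q : Type*} (r : Q → Q → Prop) : Prop := Colour3 (vecSet r)

/-!
Let `A` be a bad sequence of finite sets: `A k` never dominates `A (k + 1)`. By Hall's theorem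
some `D k ⊆ A k` has fewer neighbours in `A (k + 1)` (points lying above a point of `D k`) than
elements. Choosing `D k` as a function of `(A k, A (k + 1))` keeps everything Borel and
shift-equivariant, and as `D (k + 1) ⊆ A (k + 1)`, `D k` also has fewer neighbours in `D (k + 1)`
than elements. Call `k` covered if every point of `D (k + 1)` is such a neighbour; then
`#D (k + 1) < #D k`, so the covered indices cannot go on forever.

If from some index on no index is covered, pick `w k ∈ D (k + 1)` above no point of `D k`. From
the first such index `k₀` on, `w` is a bad sequence in `Q`, so for a Borel proper colouring `c` of
the shift on `Q⃗`, the colour `c (w from k₀) + k₀` (mod 3) is proper: the shift either lowers `k₀`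
by one or, when `k₀ = 0`, shifts `w`. Otherwise coverage changes infinitely often, and the parity
of the distance to the next change, with the two nonzero colours telling the current state, is a
proper colouring.
-/

open Finset Function Fin.NatCast

section Shift

variable {P R : Type*}

theorem seqShift_iterate_apply (X : ℕ → P) (n k : ℕ) : seqShift^[n] X k = X (k + n) := by
  induction n generalizing X with
  | zero => rfl
  | succ n ih => rw [iterate_succ_apply, ih]; rfl

def slidingBlock (f : P → P → R) (X : ℕ → P) : ℕ → R := fun k => f (X k) (X (k + 1))

theorem slidingBlock_iterate_seqShift (f : P → P → R) (n : ℕ) (X : ℕ → P) :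
    slidingBlock f (seqShift^[n] X) = seqShift^[n] (slidingBlock f X) :=
  Semiconj.iterate_right (f := slidingBlock f) (fun _ => rfl) n X

end Shift

section BoolSequences

variable (b : ℕ → Bool)

noncomputable def firstChange : ℕ := sInf {n | b (n + 1) ≠ b n}

noncomputable def markColour : Fin 3 := if Even (firstChange b) then (if b 0 then 2 else 1) else 0

theorem markColour_ne_seqShift (h : ∀ v, b ≠ fun _ => v) :
    markColour b ≠ markColour (seqShift b) := by
  have hchange : ∃ n, b (n + 1) ≠ b n := by
    by_contra! hconst
    refine h (b 0) (funext fun n => ?_)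
    induction n with
    | zero => rfl
    | succ n ih => rw [hconst n, ih]
  have hmem : b (firstChange b + 1) ≠ b (firstChange b) := Nat.sInf_mem hchange
  unfold markColour
  change _ ≠ ite _ (ite (b 1) _ _) _
  rcases hb : firstChange b with _ | m
  · rw [hb, zero_add] at hmem
    rw [if_pos Even.zero]
    split_ifs <;> simp_all
  · have hshift : firstChange (seqShift b) = m := by
      have := Nat.sInf_add (p := fun n => b (n + 1) ≠ b n) (n := 1)
        (by rw [← firstChange, hb]; omega)
      rw [← firstChange, hb] at this
      exact Nat.add_right_cancel this
    have h0 : b 1 = b 0 :=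
      not_not.1 (Nat.notMem_of_lt_sInf (m := 0) (by rw [← firstChange, hb]; omega))
    rw [hshift, h0]
    simp only [Nat.even_add_one]
    split_ifs <;> simp_all

noncomputable def stableFrom : ℕ := sInf {n | seqShift^[n] b = fun _ => false}

theorem stableFrom_seqShift (h : ∃ n, seqShift^[n] b = fun _ => false) :
    stableFrom (seqShift b) = stableFrom b - 1 := by
  have hmem : seqShift^[stableFrom b] b = fun _ => false := Nat.sInf_mem h
  rcases hb : stableFrom b with _ | m
  · rw [hb] at hmem
    exact Nat.sInf_eq_zero.2 (.inl (by simp only [iterate_zero, id] at hmem ⊢; rw [hmem]; rfl))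
  · have := Nat.sInf_add (p := fun n => seqShift^[n] b = fun _ => false) (n := 1)
      (by rw [← stableFrom, hb]; omega)
    rw [← stableFrom, hb] at this
    exact Nat.add_right_cancel this

end BoolSequences

section Colouring

variable {Q : Type*} (c : (ℕ → Q) → Fin 3)

open scoped Classical in
noncomputable def seqColour (b : ℕ → Bool) (w : ℕ → Q) : Fin 3 :=
  if ∃ n, seqShift^[n] b = fun _ => false then c (seqShift^[stableFrom b] w) + stableFrom b
  else markColour b

theorem seqColour_ne_seqShift {V : Set (ℕ → Q)} (hc : ∀ X ∈ V, c X ≠ c (seqShift X))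
    {b : ℕ → Bool} {w : ℕ → Q} (hb : ∀ n, seqShift^[n] b ≠ fun _ => true)
    (hw : ∀ n, seqShift^[n] b = (fun _ => false) → seqShift^[n] w ∈ V) :
    seqColour c b w ≠ seqColour c (seqShift b) (seqShift w) := by
  by_cases hev : ∃ n, seqShift^[n] b = fun _ => false
  · have hev' : ∃ n, seqShift^[n] (seqShift b) = fun _ => false := by
      obtain ⟨n, hn⟩ := hev
      exact ⟨n, by rw [← iterate_succ_apply, iterate_succ_apply', hn]; rfl⟩
    have hmem : seqShift^[stableFrom b] b = fun _ => false := Nat.sInf_mem hev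
    rw [seqColour, seqColour, if_pos hev, if_pos hev', stableFrom_seqShift b hev]
    rcases hN : stableFrom b with _ | m
    · rw [hN] at hmem
      simpa using hc w (hw 0 hmem)
    · rw [Nat.add_sub_cancel, ← iterate_succ_apply, Nat.cast_succ, ← add_assoc]
      exact add_ne_left.2 one_ne_zero
  · have hev' : ¬ ∃ n, seqShift^[n] (seqShift b) = fun _ => false :=
      fun ⟨n, hn⟩ => hev ⟨n + 1, hn⟩
    rw [seqColour, seqColour, if_neg hev, if_neg hev']
    refine markColour_ne_seqShift b fun v hv => ?_
    cases v
    · exact hev ⟨0, hv⟩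
    · exact hb 0 hv

end Colouring

section FiniteSubsets

variable {Q : Type*} (r : Q → Q → Prop)

def Dominates (a b : Finset Q) : Prop :=
  ∃ h : {x // x ∈ a} → {x // x ∈ b}, Injective h ∧ ∀ x, r x.1 (h x).1

open scoped Classical in
noncomputable def neighbors (t b : Finset Q) : Finset Q := {y ∈ b | ∃ x ∈ t, r x y}

theorem exists_card_neighbors_lt_of_not_dominates {a b : Finset Q} (h : ¬ Dominates r a b) :
    ∃ t ⊆ a, #(neighbors r t b) < #t := by
  classical
  obtain ⟨s, hs⟩ :
      ∃ s : Finset {x // x ∈ a}, #{y : {y // y ∈ b} | ∃ x ∈ s, r x y} < #s := by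
    by_contra! hall
    exact h ((Fintype.all_card_le_filter_rel_iff_exists_injective _).1 hall)
  refine ⟨s.map (Embedding.subtype _), fun x hx => ?_, ?_⟩
  · obtain ⟨x, -, rfl⟩ := mem_map.1 hx
    exact x.2
  · rw [card_map]
    convert hs using 1
    rw [← card_map (Embedding.subtype _)]
    congr 1
    ext y
    simp [neighbors, and_comm]

open scoped Classical in
noncomputable def deficientCore (a b : Finset Q) : Finset Q :=
  if h : ∃ t ⊆ a, #(neighbors r t b) < #t then h.choose else ∅

theorem deficientCore_subset (a b : Finset Q) : deficientCore r a b ⊆ a := by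
  unfold deficientCore
  split_ifs with h
  · exact h.choose_spec.1
  · exact empty_subset a

theorem card_neighbors_deficientCore_lt {a b b' : Finset Q} (h : ¬ Dominates r a b)
    (hb : b' ⊆ b) : #(neighbors r (deficientCore r a b) b') < #(deficientCore r a b) := by
  classical
  have hex := exists_card_neighbors_lt_of_not_dominates r h
  rw [deficientCore, dif_pos hex]
  exact (card_le_card (filter_subset_filter _ hb)).trans_lt hex.choose_spec.2

open scoped Classical in
noncomputable def covers (a b : Finset Q) : Bool := ∀ y ∈ b, ∃ x ∈ a, r x y

open scoped Classical in
noncomputable def uncoveredPoint [Nonempty Q] (a b : Finset Q) : Q :=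
  if h : ∃ y ∈ b, ∀ x ∈ a, ¬ r x y then h.choose else Classical.arbitrary Q

theorem uncoveredPoint_spec [Nonempty Q] {a b : Finset Q} (h : covers r a b = false) :
    uncoveredPoint r a b ∈ b ∧ ∀ x ∈ a, ¬ r x (uncoveredPoint r a b) := by
  have hex : ∃ y ∈ b, ∀ x ∈ a, ¬ r x y := by simpa [covers] using h
  rw [uncoveredPoint, dif_pos hex]
  exact hex.choose_spec

theorem iterate_seqShift_slidingBlock_covers_ne_true {D : ℕ → Finset Q}
    (hD : ∀ k, #(neighbors r (D k) (D (k + 1))) < #(D k)) (n : ℕ) :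
    seqShift^[n] (slidingBlock (covers r) D) ≠ fun _ => true := by
  intro h
  rw [← slidingBlock_iterate_seqShift] at h
  set E := seqShift^[n] D
  have hE (k : ℕ) : #(neighbors r (E k) (E (k + 1))) < #(E k) := by
    simpa only [E, seqShift_iterate_apply, Nat.add_right_comm] using hD (k + n)
  obtain ⟨k, hk⟩ := WellFounded.not_rel_apply_succ (r := (· < ·)) fun k => #(E k)
  have hcov : ∀ y ∈ E (k + 1), ∃ x ∈ E k, r x y := by
    simpa [slidingBlock, covers] using congrFun h k
  classical
  exact hk ((card_le_card fun y hy => mem_filter.2 ⟨hy, hcov y hy⟩).trans_lt (hE k))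

theorem iterate_seqShift_slidingBlock_uncoveredPoint_mem_vecSet [Nonempty Q] {D : ℕ → Finset Q}
    {n : ℕ} (h : seqShift^[n] (slidingBlock (covers r) D) = fun _ => false) :
    seqShift^[n] (slidingBlock (uncoveredPoint r) D) ∈ vecSet r := by
  rw [← slidingBlock_iterate_seqShift] at h ⊢
  exact fun k => (uncoveredPoint_spec r (congrFun h (k + 1))).2 _
    (uncoveredPoint_spec r (congrFun h k)).1

noncomputable def finsetColour [Nonempty Q] (c : (ℕ → Q) → Fin 3) (A : ℕ → Finset Q) :
    Fin 3 :=
  seqColour c (slidingBlock (covers r) (slidingBlock (deficientCore r) A))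
    (slidingBlock (uncoveredPoint r) (slidingBlock (deficientCore r) A))

theorem finsetColour_ne_seqShift [Nonempty Q] {c : (ℕ → Q) → Fin 3}
    (hc : ∀ X ∈ vecSet r, c X ≠ c (seqShift X)) {A : ℕ → Finset Q}
    (hA : A ∈ vecSet (Dominates r)) :
    finsetColour r c A ≠ finsetColour r c (seqShift A) :=
  seqColour_ne_seqShift c hc
    (iterate_seqShift_slidingBlock_covers_ne_true r fun k =>
      card_neighbors_deficientCore_lt r (hA k) (deficientCore_subset r _ _))
    fun _ => iterate_seqShift_slidingBlock_uncoveredPoint_mem_vecSet r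

end FiniteSubsets

section Measurability

variable {α : Type*} [MeasurableSpace α]

theorem measurable_sInf_setOf {p : ℕ → α → Prop} (hp : ∀ n, Measurable (p n)) :
    Measurable fun x => sInf {n | p n x} := by
  classical
  have hq (x : α) : ∃ n, p n x ∨ ∀ m, ¬ p m x := by
    by_cases h : ∃ n, p n x
    · exact h.imp fun _ => .inl
    · exact ⟨0, .inr (not_exists.1 h)⟩
  convert measurable_find hq fun n => ((hp n).or (Measurable.forall fun m => (hp m).not)).setOf
    using 1
  funext x
  by_cases h : ∃ n, p n x
  · rw [Nat.sInf_def (s := {n | p n x}) h]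
    exact Nat.find_congr' fun {n} => by simp [h]
  · rw [Set.eq_empty_of_forall_notMem (s := {n | p n x}) (not_exists.1 h), Nat.sInf_empty]
    exact ((Nat.find_eq_zero _).2 (.inr (not_exists.1 h))).symm

theorem measurable_seqShift : Measurable (seqShift : (ℕ → α) → ℕ → α) :=
  measurable_pi_lambda _ fun k => measurable_pi_apply (k + 1)

theorem measurable_firstChange : Measurable firstChange :=
  measurable_sInf_setOf fun n => by fun_prop

theorem measurable_markColour : Measurable markColour :=
  (measurable_of_countable fun q : ℕ × Bool =>
      if Even q.1 then (if q.2 then 2 else 1) else (0 : Fin 3)).comp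
    (f := fun b => (firstChange b, b 0)) (measurable_firstChange.prodMk (measurable_pi_apply 0))

theorem measurable_stableFrom : Measurable stableFrom :=
  measurable_sInf_setOf fun n => (measurable_seqShift.iterate n).eq_const _

theorem Measurable.seqColour {β : Type*} [MeasurableSpace β] {c : (ℕ → α) → Fin 3}
    (hc : Measurable c) {f : β → ℕ → Bool} {g : β → ℕ → α} (hf : Measurable f)
    (hg : Measurable g) : Measurable fun x => seqColour c (f x) (g x) := by
  have hN : Measurable fun x => stableFrom (f x) := measurable_stableFrom.comp hf
  have htail : Measurable fun x => seqShift^[stableFrom (f x)] (g x) :=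
    (measurable_from_prod_countable_left (f := fun q : (ℕ → α) × ℕ => seqShift^[q.2] q.1)
      fun n => measurable_seqShift.iterate n).comp (hg.prodMk hN)
  refine Measurable.ite ?_ ?_ (measurable_markColour.comp hf)
  · exact measurableSet_setOfPred.2 (Measurable.exists fun n =>
      ((measurable_seqShift.iterate n).comp hf).eq_const _)
  · exact (measurable_of_countable fun q : Fin 3 × ℕ => q.1 + q.2).comp
      ((hc.comp htail).prodMk hN)

variable {P R : Type*} [MeasurableSpace P] [MeasurableSingletonClass P] [Countable P]
  [MeasurableSpace R]

theorem measurable_slidingBlock (f : P → P → R) : Measurable (slidingBlock f) :=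
  measurable_pi_lambda _ fun k => (measurable_of_countable (uncurry f)).comp
    (f := fun X : ℕ → P => (X k, X (k + 1)))
    ((measurable_pi_apply k).prodMk (measurable_pi_apply (k + 1)))

theorem measurableSet_vecSet (r : P → P → Prop) : MeasurableSet (vecSet r) :=
  measurableSet_setOfPred.2 (Measurable.forall fun k =>
    (measurable_pi_apply k).comp (measurable_slidingBlock fun x y => ¬ r x y))

theorem isThin_iff {r : P → P → Prop} :
    IsThin r ↔
      ∃ c : (ℕ → P) → Fin 3, Measurable c ∧ ∀ X ∈ vecSet r, c X ≠ c (seqShift X) := by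
  obtain rfl : ‹MeasurableSpace P› = ⊤ := top_unique fun s _ => MeasurableSet.of_discrete
  let _ : MeasurableSpace P := ⊤
  constructor
  · rintro ⟨c, hc, hne⟩
    classical
    refine ⟨fun X => if h : X ∈ vecSet r then c ⟨X, h⟩ else 0,
      hc.dite measurable_const (measurableSet_vecSet r), fun X hX => ?_⟩
    have hX' : seqShift X ∈ vecSet r := fun k => hX (k + 1)
    simpa [hX, hX'] using hne X hX hX'
  · rintro ⟨c, hc, hne⟩
    exact ⟨fun X => c X, hc.comp measurable_subtype_coe, fun X hX _ => hne X hX⟩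

end Measurability

theorem measurable_finsetColour {Q : Type*} [Countable Q] [MeasurableSpace Q] [Nonempty Q]
    (r : Q → Q → Prop) {c : (ℕ → Q) → Fin 3}
    (hc : Measurable c) : Measurable (finsetColour r c) := by
  have hD := measurable_slidingBlock (deficientCore r)
  exact hc.seqColour ((measurable_slidingBlock _).comp hD) ((measurable_slidingBlock _).comp hD)

theorem thin_finite_subsets_general {Q : Type*} [Countable Q]
    (r : Q → Q → Prop)
    (hQ : IsThin r) :
    IsThin (fun a b : Finset Q =>
      ∃ h : {x : Q // x ∈ a} → {x : Q // x ∈ b},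
        Function.Injective h ∧ ∀ x : {x : Q // x ∈ a}, r x.1 (h x).1) := by
  let _ : MeasurableSpace Q := ⊤
  obtain ⟨c, hc, hcX⟩ := isThin_iff.1 hQ
  rcases isEmpty_or_nonempty Q with hQe | hQne
  · refine isThin_iff.2 ⟨fun _ => 0, measurable_const, fun A hA => absurd ?_ (hA 0)⟩
    exact ⟨fun x => isEmptyElim x.1, fun x => isEmptyElim x.1, fun x => isEmptyElim x.1⟩
  exact isThin_iff.2 ⟨finsetColour r c, measurable_finsetColour r hc,
    fun A hA => finsetColour_ne_seqShift r hcX hA⟩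

/-- If `Q` is a countable thin quasi-order, then `[Q]^{<ω}`, the finite subsets of `Q` ordered
by domination along an injection, is thin. -/
theorem thin_finite_subsets {Q : Type*} [Countable Q]
    (r : Q → Q → Prop) (hr : Reflexive r) (ht : Transitive r)
    (hQ : IsThin r) :
    IsThin (fun a b : Finset Q =>
      ∃ h : {x : Q // x ∈ a} → {x : Q // x ∈ b},
        Function.Injective h ∧ ∀ x : {x : Q // x ∈ a}, r x.1 (h x).1) :=
  thin_finite_subsets_general r hQ
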